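/- arXiv:1909.04650 — 5 statements merged into one kernel-verified Lean document; each statement's English description precedes it below -/
import Mathlib

section
/- For every partition x ∈ P_n and every u ∈ ℤ^n_{≥0}, the monomial e^u = e_1^{u_1}⋯e_n^{u_n} belongs to the ideal I_x if and only if there exists a permutation σ ∈ S_n with u_{σ(i)} ≥ x_i for all i = 1,…,n (equivalently, the weakly decreasing rearrangement of u dominates x componentwise). -/
open MvPolynomial

/-- `PartitionOn n x` : `x` is a weakly decreasing sequence of naturals (0-based
indexing, so `x 0` is the first part `x_1`) vanishing from index `n` on; this
encodes a partition in `P_n ⊆ ℤ^n_{≥0}`. -/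
def PartitionOn (n : ℕ) (x : ℕ → ℕ) : Prop :=
  (∀ i j : ℕ, i ≤ j → x j ≤ x i) ∧ ∀ i : ℕ, n ≤ i → x i = 0

/-- A partition: a weakly decreasing, eventually zero sequence of naturals. -/
def IsPartitionF (x : ℕ → ℕ) : Prop :=
  (∀ i j : ℕ, i ≤ j → x j ≤ x i) ∧ ∃ n : ℕ, ∀ i : ℕ, n ≤ i → x i = 0

/-- The conjugate partition (1-based index): `conj x i = #{j : x_j ≥ i}`. -/
noncomputable def conj (x : ℕ → ℕ) (i : ℕ) : ℕ :=
  Set.ncard { j : ℕ | i ≤ x j }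

/-- The truncation `x(c)`, whose parts are `min (x i) c`. -/
def trunc (x : ℕ → ℕ) (c : ℕ) : ℕ → ℕ := fun i => min (x i) c

/-- The rectangular partition `(b^a)`: `a` parts equal to `b`. -/
def rect (a b : ℕ) : ℕ → ℕ := fun i => if i < a then b else 0

/-- The size `|x| = x_1 + ⋯ + x_n` of a partition supported in the first `n` indices. -/
def psize (n : ℕ) (x : ℕ → ℕ) : ℕ := ∑ i ∈ Finset.range n, x i

/-- The set `Z(X)` : pairs `(z, l)` with `z ∈ P_n`, `l ≥ 0` such that, writing `c = z_1`:
(1) there is `x ∈ X` with `x(c) ≤ z` and `x'_{c+1} ≤ l+1`, and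
(2) every `x ∈ X` with `x(c) ≤ z` and `x'_{c+1} ≤ l+1` has `x'_{c+1} = l+1`. -/
noncomputable def ZX (n : ℕ) (X : Set (ℕ → ℕ)) : Set ((ℕ → ℕ) × ℕ) :=
  { zl | PartitionOn n zl.1 ∧
    (∃ x ∈ X, trunc x (zl.1 0) ≤ zl.1 ∧ conj x (zl.1 0 + 1) ≤ zl.2 + 1) ∧
    ∀ x ∈ X, trunc x (zl.1 0) ≤ zl.1 → conj x (zl.1 0 + 1) ≤ zl.2 + 1 →
      conj x (zl.1 0 + 1) = zl.2 + 1 }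

/-- The monomial `e^u = e_1^{u_1} ⋯ e_n^{u_n}` in `S = k[e_1, …, e_n]`. -/
noncomputable def mon (k : Type*) [Field k] (n : ℕ) (u : ℕ → ℕ) : MvPolynomial (Fin n) k :=
  ∏ i : Fin n, (X i : MvPolynomial (Fin n) k) ^ u (i : ℕ)

/-- The ideal `I_x` generated by the `S_n`-orbit of the monomial `e^x`. -/
noncomputable def Ipart (k : Type*) [Field k] (n : ℕ) (x : ℕ → ℕ) :
    Ideal (MvPolynomial (Fin n) k) :=
  Ideal.span { f | ∃ σ : Equiv.Perm (Fin n),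
    f = ∏ i : Fin n, (X i : MvPolynomial (Fin n) k) ^ x ((σ i : Fin n) : ℕ) }

/-- The ideal `I_X = Σ_{x ∈ X} I_x`. -/
noncomputable def IXset (k : Type*) [Field k] (n : ℕ) (Xs : Set (ℕ → ℕ)) :
    Ideal (MvPolynomial (Fin n) k) :=
  ⨆ x ∈ Xs, Ipart k n x

/-- `succ(z,l) = {x ∈ P_n : x ≥ z and x_i > z_i for some i > l}` (1-based `i > l`
corresponds to 0-based index `≥ l`). -/
def succSet (n l : ℕ) (z : ℕ → ℕ) : Set (ℕ → ℕ) :=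
  { x | PartitionOn n x ∧ (∀ i, z i ≤ x i) ∧ ∃ i, l ≤ i ∧ z i < x i }

/-- `Y_{z,l} = {((z_1+1)^{l+1})} ∪ {((z_i+1)^i) : l+1 < i ≤ n, z_{i-1} > z_i}`
(here `i = m+2` in 1-based indexing). -/
def Yset (n : ℕ) (z : ℕ → ℕ) (l : ℕ) : Set (ℕ → ℕ) :=
  {rect (l+1) (z 0 + 1)} ∪
    { y | ∃ m : ℕ, l ≤ m ∧ m + 2 ≤ n ∧ z (m+1) < z m ∧ y = rect (m+2) (z (m+1) + 1) }

/-- `Y'_{z,l} = {((z_i+1)^i) : l+1 < i ≤ n, z_{i-1} > z_i}`. -/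
def Y'set (n : ℕ) (z : ℕ → ℕ) (l : ℕ) : Set (ℕ → ℕ) :=
  { y | ∃ m : ℕ, l ≤ m ∧ m + 2 ≤ n ∧ z (m+1) < z m ∧ y = rect (m+2) (z (m+1) + 1) }

/-- An ideal `I` is symmetric shifted if for every monomial `e^x ∈ I` with `x ∈ P_n`
and every `1 < k ≤ n` (0-based `0 < j < n`) with `x_1 > x_k`, one has `e^x · e_k/e_1 ∈ I`. -/
def SymShifted (k : Type*) [Field k] (n : ℕ) (I : Ideal (MvPolynomial (Fin n) k)) : Prop :=
  ∀ x : ℕ → ℕ, PartitionOn n x → mon k n x ∈ I →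
    ∀ j : ℕ, 0 < j → j < n → x j < x 0 →
      mon k n (fun i => if i = 0 then x 0 - 1 else if i = j then x j + 1 else x i) ∈ I

/-- The partitioning problem `BP(d, C; w)` is `r`-feasible: the multiset of `d` copies of
each of `w_1, …, w_n` (balls indexed by `Fin d × Fin n`, ball `(j,i)` of weight `w_i`)
can be distributed into bins `B_1, …, B_n` of exactly `d` balls each so that
`w(B_i) ≤ C_i` for all `i = r+1, …, n` (0-based bins `≥ r`). -/
def RFeasible (n d r : ℕ) (C w : ℕ → ℕ) : Prop :=
  ∃ A : Fin d × Fin n → Fin n,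
    (∀ b : Fin n, (Finset.univ.filter fun p => A p = b).card = d) ∧
    ∀ b : Fin n, r ≤ (b : ℕ) →
      (∑ p ∈ Finset.univ.filter (fun p => A p = b), w ((p.2 : Fin n) : ℕ)) ≤ C (b : ℕ)

/-- `X_w^d = {x ∈ P_n : x = σ_1(w) + ⋯ + σ_d(w) for some σ_1, …, σ_d ∈ S_n}`. -/
def XwPow (n d : ℕ) (w : ℕ → ℕ) : Set (ℕ → ℕ) :=
  { x | PartitionOn n x ∧ ∃ σ : Fin d → Equiv.Perm (Fin n),
      ∀ i : Fin n, x (i : ℕ) = ∑ j : Fin d, w ((σ j i : Fin n) : ℕ) }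

/-- `Y_n`: the elements of `Y` with at most `n` nonzero parts, regarded in `P_n`. -/
def restr (Y : Set (ℕ → ℕ)) (n : ℕ) : Set (ℕ → ℕ) :=
  { x ∈ Y | ∀ i, n ≤ i → x i = 0 }

/-! `I_x` is a monomial ideal, generated by the monomials `e^{x ∘ τ}`, `τ ∈ S_n`. A monomial lies
in a monomial ideal iff it is divisible by one of the generators, i.e. iff its exponent vector
dominates `x ∘ τ` for some `τ`; replacing `τ` by `τ⁻¹` moves the permutation onto `u`. -/

namespace MvPolynomial

variable {σ R : Type*} [Fintype σ] [CommSemiring R]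

theorem prod_univ_X_pow_eq_monomial (f : σ → ℕ) :
    ∏ i, (X i : MvPolynomial σ R) ^ f i = monomial (Finsupp.equivFunOnFinite.symm f) 1 := by
  rw [← prod_X_pow_eq_monomial]
  refine (Finset.prod_subset (Finset.subset_univ _) fun i _ hi => ?_).symm
  rw [show f i = 0 from Finsupp.notMem_support_iff.mp hi, pow_zero]

theorem prod_univ_X_pow_mem_span_iff [Nontrivial R] (u : σ → ℕ) (G : Set (σ → ℕ)) :
    ∏ i, (X i : MvPolynomial σ R) ^ u i ∈
        Ideal.span ((fun g : σ → ℕ => ∏ i, (X i : MvPolynomial σ R) ^ g i) '' G) ↔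
      ∃ g ∈ G, g ≤ u := by
  classical
  simp_rw [prod_univ_X_pow_eq_monomial]
  rw [← Set.image_image (fun s => monomial s (1 : R)), mem_ideal_span_monomial_image,
    support_monomial, if_neg one_ne_zero]
  simp only [Finset.mem_singleton, forall_eq, Set.exists_mem_image, Finsupp.le_def, Pi.le_def,
    Finsupp.coe_equivFunOnFinite_symm]

end MvPolynomial

open Equiv

theorem Ipart_eq_span (k : Type*) [Field k] (n : ℕ) (x : ℕ → ℕ) :
    Ipart k n x = Ideal.span ((fun g : Fin n → ℕ => ∏ i, (X i : MvPolynomial (Fin n) k) ^ g i) ''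
      Set.range fun (τ : Perm (Fin n)) i => x (τ i)) := by
  rw [Ipart, ← Set.range_comp]
  simp only [Set.range, eq_comm, Function.comp_def]

theorem stmt_0_general {k : Type*} [Field k] (n : ℕ) (x : ℕ → ℕ)
    (u : ℕ → ℕ) :
    mon k n u ∈ Ipart k n x ↔
      ∃ σ : Equiv.Perm (Fin n), ∀ i : Fin n, x (i : ℕ) ≤ u ((σ i : Fin n) : ℕ) := by
  rw [mon, Ipart_eq_span, MvPolynomial.prod_univ_X_pow_mem_span_iff, Set.exists_range_iff]
  refine inv_surjective.exists.trans (exists_congr fun τ => ?_)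
  rw [Pi.le_def, ← τ.forall_congr_right]
  simp only [Perm.coe_inv, symm_apply_apply]

theorem stmt_0 {k : Type*} [Field k] (n : ℕ) (x : ℕ → ℕ) (hx : PartitionOn n x)
    (u : ℕ → ℕ) (hu : ∀ i, n ≤ i → u i = 0) :
    mon k n u ∈ Ipart k n x ↔
      ∃ σ : Equiv.Perm (Fin n), ∀ i : Fin n, x (i : ℕ) ≤ u ((σ i : Fin n) : ℕ) :=
  stmt_0_general n x u
end

section
/- Let X ⊆ P_n and 1 ≤ p ≤ n. Define X^{:p} = {x(c) : x ∈ X, c ∈ ℤ_{≥0}, x'_{c+1} ≤ p, and x'_c > p whenever c > 0}. Then the saturation I_X : I_p^∞ equals I_{X^{:p}}, where I_p = I_{(1^p)} is the ideal generated by all square-free monomials of degree p and I : J^∞ = ∪_{d≥0} (I : J^d). -/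
open MvPolynomial

/-!
All ideals involved are monomial ideals, and `f ∈ I_X` iff every monomial `e^u` of `f`
dominates `σ x` for some `x ∈ X` and permutation `σ`; by Hall's theorem, such a `σ` exists iff
every level set `{u ≥ v}` is at least as large as `{x ≥ v}`.

If `f · I_p^d ⊆ I_X`, test a monomial `e^u` of `f` against `(e_S)^d`, where `S` holds the
positions of the `p` largest entries of `u`: the resulting `x ∈ X` has `x(x_{p+1}) ∈ X^{:p}`
dominated by a permutation of `u`. Conversely, for `d > n x_1` every monomial of `I_p^d` has at
least `p` exponents `≥ x_1`; these absorb the at most `x'_{c+1} ≤ p` parts of `x` exceeding `c`,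
so `e^{σ x(c)} I_p^d ⊆ I_x`.
-/

section MonomialIdeals

open scoped Pointwise

variable {σ R : Type*} [CommSemiring R]

theorem span_monomial_mul_span_monomial (A B : Set (σ →₀ ℕ)) :
    Ideal.span ((fun s => monomial s (1 : R)) '' A) * Ideal.span ((fun s => monomial s 1) '' B) =
      Ideal.span ((fun s => monomial s (1 : R)) '' (A + B)) := by
  rw [Ideal.span_mul_span']
  congr 1
  ext f
  simp only [Set.mem_mul, Set.mem_image, Set.mem_add]
  constructor
  · rintro ⟨_, ⟨a, ha, rfl⟩, _, ⟨b, hb, rfl⟩, rfl⟩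
    exact ⟨a + b, ⟨a, ha, b, hb, rfl⟩, by rw [monomial_mul, one_mul]⟩
  · rintro ⟨_, ⟨a, ha, b, hb, rfl⟩, rfl⟩
    exact ⟨_, ⟨a, ha, rfl⟩, _, ⟨b, hb, rfl⟩, by rw [monomial_mul, one_mul]⟩

end MonomialIdeals

section Domination

open Finset

variable {ι α : Type*} [Fintype ι] [LinearOrder α]

/-- Hall's theorem: each `j` is matched to an `i` with `y j ≤ u i`; the Hall condition for a
set of `j`s reduces to the level set of its smallest `y`-value. -/
theorem exists_perm_le_of_card_le {y u : ι → α}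
    (h : ∀ v, #{j | v ≤ y j} ≤ #{i | v ≤ u i}) :
    ∃ τ : Equiv.Perm ι, ∀ i, y (τ i) ≤ u i := by
  classical
  obtain ⟨f, hf, hfy⟩ := (Fintype.all_card_le_filter_rel_iff_exists_injective
    (fun j i => y j ≤ u i)).mp fun A => by
      rcases A.eq_empty_or_nonempty with rfl | hA
      · simp
      obtain ⟨j₀, hj₀, hmin⟩ := A.exists_min_image y hA
      calc #A ≤ #{j | y j₀ ≤ y j} := card_le_card fun j hj => by simpa using hmin j hj
        _ ≤ #{i | y j₀ ≤ u i} := h _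
        _ ≤ #{i | ∃ j ∈ A, y j ≤ u i} :=
          card_le_card fun i hi => by
            simp only [mem_filter, mem_univ, true_and] at hi ⊢
            exact ⟨j₀, hj₀, hi⟩
  let e := Equiv.ofBijective f (Finite.injective_iff_bijective.mp hf)
  refine ⟨e.symm, fun i => ?_⟩
  simpa only [e, Equiv.ofBijective_apply_symm_apply] using hfy (e.symm i)

theorem card_filter_comp_perm (τ : Equiv.Perm ι) (P : ι → Prop) [DecidablePred P] :
    #{i | P (τ i)} = #{j | P j} :=
  card_equiv τ fun i => by simp

theorem exists_perm_antitone {n : ℕ} (u : Fin n → α) :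
    ∃ τ : Equiv.Perm (Fin n), ∀ i j, τ i ≤ τ j → u j ≤ u i := by
  refine ⟨(Tuple.sort u).symm.trans Fin.revPerm, fun i j hij => ?_⟩
  have := Tuple.monotone_sort u (Fin.rev_le_rev.mp hij)
  simpa using this

end Domination

theorem prod_X_pow_eq_monomial_equivFunOnFinite {σ R : Type*} [Fintype σ] [CommSemiring R]
    (g : σ → ℕ) :
    ∏ i, (X i : MvPolynomial σ R) ^ g i = monomial (Finsupp.equivFunOnFinite.symm g) 1 := by
  rw [monomial_eq, C_1, one_mul, Finsupp.prod_fintype _ _ fun i => pow_zero _]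
  simp

def permExps (n : ℕ) (x : ℕ → ℕ) : Set (Fin n →₀ ℕ) :=
  {s | ∃ σ : Equiv.Perm (Fin n), ∀ i, s i = x (σ i)}

section IdealsOfPartitions

variable {k : Type*} [Field k] {n : ℕ}

theorem Ipart_eq_span_s1 (x : ℕ → ℕ) :
    Ipart k n x = Ideal.span ((fun s => monomial s (1 : k)) '' permExps n x) := by
  rw [Ipart]
  congr 1
  ext f
  simp only [Set.mem_ofPred_eq, Set.mem_image, permExps, prod_X_pow_eq_monomial_equivFunOnFinite]
  constructor
  · rintro ⟨σ, rfl⟩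
    exact ⟨_, ⟨σ, fun i => rfl⟩, rfl⟩
  · rintro ⟨s, ⟨σ, hs⟩, rfl⟩
    obtain rfl : s = Finsupp.equivFunOnFinite.symm fun i => x (σ i) :=
      Finsupp.ext fun i => by simp [hs]
    exact ⟨σ, rfl⟩

theorem IXset_eq_span (Xs : Set (ℕ → ℕ)) :
    IXset k n Xs = Ideal.span ((fun s => monomial s (1 : k)) '' ⋃ x ∈ Xs, permExps n x) := by
  simp only [IXset, Ipart_eq_span_s1, Set.image_iUnion₂, Ideal.span_iUnion]

theorem mem_IXset_iff {Xs : Set (ℕ → ℕ)} {f : MvPolynomial (Fin n) k} :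
    f ∈ IXset k n Xs ↔
      ∀ u ∈ f.support, ∃ x ∈ Xs, ∃ σ : Equiv.Perm (Fin n), ∀ i, x (σ i) ≤ u i := by
  simp only [IXset_eq_span, mem_ideal_span_monomial_image, Set.mem_iUnion, permExps,
    Set.mem_ofPred_eq, Finsupp.le_def]
  refine forall₂_congr fun u _ => ⟨?_, ?_⟩
  · rintro ⟨s, ⟨x, hx, σ, hs⟩, hsu⟩
    exact ⟨x, hx, σ, fun i => hs i ▸ hsu i⟩
  · rintro ⟨x, hx, σ, hxu⟩
    exact ⟨Finsupp.equivFunOnFinite.symm fun i => x (σ i), ⟨x, hx, σ, fun i => rfl⟩, hxu⟩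

theorem monomial_mem_IXset_iff {Xs : Set (ℕ → ℕ)} {u : Fin n →₀ ℕ} :
    monomial u (1 : k) ∈ IXset k n Xs ↔
      ∃ x ∈ Xs, ∃ σ : Equiv.Perm (Fin n), ∀ i, x (σ i) ≤ u i := by
  classical
  rw [mem_IXset_iff, support_monomial, if_neg one_ne_zero]
  simp

end IdealsOfPartitions

section Counting

open Finset

theorem card_filter_val_lt {n p : ℕ} (hpn : p ≤ n) : #{j : Fin n | (j : ℕ) < p} = p := by
  have : ({j : Fin n | (j : ℕ) < p} : Finset _).map Fin.valEmbedding = range p := by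
    ext m
    simp only [mem_map, mem_filter, mem_univ, true_and, Fin.valEmbedding_apply, mem_range]
    exact ⟨fun ⟨j, hj, hjm⟩ => hjm ▸ hj, fun hm => ⟨⟨m, by omega⟩, hm, rfl⟩⟩
  rw [← card_map, this, card_range]

variable {n : ℕ} {x : ℕ → ℕ}

theorem conj_eq_card (hx : PartitionOn n x) {v : ℕ} (hv : 0 < v) :
    conj x v = #{j : Fin n | v ≤ x j} := by
  have : {j : ℕ | v ≤ x j} =
      ((({j : Fin n | v ≤ x j} : Finset _).map Fin.valEmbedding : Finset ℕ) : Set ℕ) := by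
    ext m
    simp only [Set.mem_ofPred_eq, coe_map, Set.mem_image, coe_filter, mem_univ, true_and,
      Fin.valEmbedding_apply]
    refine ⟨fun hm => ⟨⟨m, ?_⟩, hm, rfl⟩, fun ⟨j, hj, hjm⟩ => hjm ▸ hj⟩
    by_contra hnm
    have := hx.2 m (not_lt.mp hnm)
    omega
  rw [conj, this, Set.ncard_coe_finset, card_map]

theorem conj_apply_succ_le (hx : Antitone x) (p : ℕ) : conj x (x p + 1) ≤ p := by
  calc conj x (x p + 1) ≤ (Set.Iio p).ncard :=
        Set.ncard_le_ncard (fun j (hj : x p + 1 ≤ x j) => not_le.mp fun hpj : p ≤ j => by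
          have := hx hpj; omega) (Set.finite_Iio p)
    _ = p := Set.ncard_Iio_nat p

theorem lt_card_filter_le (hx : PartitionOn n x) {v p : ℕ} (hv : 0 < v) (hvp : v ≤ x p) :
    p < #{j : Fin n | v ≤ x j} := by
  have hpn : p < n := not_le.mp fun h => by have := hx.2 p h; omega
  calc p < #{j : Fin n | (j : ℕ) < p + 1} := by rw [card_filter_val_lt hpn]; omega
    _ ≤ #{j : Fin n | v ≤ x j} := card_le_card fun j hj => by
      simp only [mem_filter, mem_univ, true_and] at hj ⊢
      exact hvp.trans (hx.1 _ _ (by omega))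

theorem lt_conj_apply (hx : PartitionOn n x) {p : ℕ} (hp : 0 < x p) : p < conj x (x p) := by
  rw [conj_eq_card hx hp]
  exact lt_card_filter_le hx hp le_rfl

/-- Pigeonhole: entries below `a` contribute at most `card ι * a < d` to the sum, so fewer than
`p` entries at least `a` would leave the sum below `d * p`. -/
theorem le_card_filter_le_of_sum_eq {ι : Type*} [Fintype ι] {w : ι → ℕ} {a d p : ℕ}
    (hw : ∀ i, w i ≤ d) (hsum : ∑ i, w i = d * p) (hd : Fintype.card ι * a < d) :
    p ≤ #{i | a ≤ w i} := by
  classical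
  by_contra! hlt
  have hbig : ∑ i ∈ univ.filter (fun i => a ≤ w i), w i ≤ #{i | a ≤ w i} * d :=
    sum_le_card_nsmul _ _ _ fun i _ => hw i
  have hsmall : ∑ i ∈ univ.filter (fun i => ¬ a ≤ w i), w i ≤ Fintype.card ι * a :=
    calc _ ≤ #{i | ¬ a ≤ w i} * a :=
          sum_le_card_nsmul _ _ _ fun i hi => by simp only [mem_filter] at hi; omega
      _ ≤ Fintype.card ι * a := Nat.mul_le_mul_right _ (card_le_univ _)
  have hsplit := sum_filter_add_sum_filter_not univ (fun i => a ≤ w i) w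
  have : (#{i | a ≤ w i} + 1) * d ≤ p * d := Nat.mul_le_mul_right _ hlt
  nlinarith

end Counting

section Saturation

open Finset

variable {k : Type*} [Field k] {n p : ℕ}

theorem Ipart_rect_pow_le_span (hpn : p ≤ n) (d : ℕ) :
    Ipart k n (rect p 1) ^ d ≤ Ideal.span ((fun s => monomial s (1 : k)) ''
      {w : Fin n →₀ ℕ | ∑ i, w i = d * p ∧ ∀ i, w i ≤ d}) := by
  induction d with
  | zero =>
    rw [pow_zero, Ideal.one_eq_top, top_le_iff, Ideal.eq_top_iff_one]
    exact Ideal.subset_span ⟨0, ⟨by simp, by simp⟩, by simp⟩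
  | succ d ih =>
    rw [pow_succ]
    refine (Ideal.mul_mono ih (Ipart_eq_span_s1 _).le).trans ?_
    rw [span_monomial_mul_span_monomial]
    refine Ideal.span_mono (Set.image_mono ?_)
    rintro _ ⟨w, ⟨hsum, hle⟩, e, ⟨σ, he⟩, rfl⟩
    have hsum_e : ∑ i, e i = p := by
      simp_rw [he, Equiv.sum_comp σ (fun i : Fin n => rect p 1 i), rect, sum_boole,
        card_filter_val_lt hpn, Nat.cast_id]
    have he1 : ∀ i, e i ≤ 1 := fun i => by rw [he, rect]; split <;> omega
    refine ⟨?_, fun i => ?_⟩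
    · simp only [Finsupp.add_apply, sum_add_distrib, hsum, hsum_e]
      ring
    · simpa using Nat.add_le_add (hle i) (he1 i)

theorem exists_perm_le_trunc_add {x : ℕ → ℕ} (hx : PartitionOn n x) {c : ℕ}
    (hc : conj x (c + 1) ≤ p)
    (σ : Equiv.Perm (Fin n)) {w : Fin n → ℕ} (hw : p ≤ #{i | x 0 ≤ w i}) :
    ∃ τ : Equiv.Perm (Fin n), ∀ i, x (τ i) ≤ min (x (σ i)) c + w i := by
  refine exists_perm_le_of_card_le (y := fun j : Fin n => x j) fun v => ?_
  by_cases hvc : v ≤ c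
  · rw [← card_filter_comp_perm σ (fun j : Fin n => v ≤ x j)]
    exact card_le_card fun i hi => by
      simp only [mem_filter, mem_univ, true_and] at hi ⊢
      omega
  by_cases hv0 : x 0 < v
  · rw [card_eq_zero.mpr (filter_eq_empty_iff.mpr fun j _ => by
      have := hx.1 0 j j.val.zero_le; omega)]
    exact Nat.zero_le _
  calc #{j : Fin n | v ≤ x j} ≤ #{j : Fin n | c + 1 ≤ x j} :=
        card_le_card fun j hj => by simp only [mem_filter, mem_univ, true_and] at hj ⊢; omega
    _ = conj x (c + 1) := (conj_eq_card hx c.succ_pos).symm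
    _ ≤ #{i | x 0 ≤ w i} := hc.trans hw
    _ ≤ #{i | v ≤ min (x (σ i)) c + w i} :=
        card_le_card fun i hi => by simp only [mem_filter, mem_univ, true_and] at hi ⊢; omega

theorem Ipart_trunc_le_colon {Xs : Set (ℕ → ℕ)} {x : ℕ → ℕ} (hxX : x ∈ Xs)
    (hx : PartitionOn n x) (hpn : p ≤ n) {c : ℕ} (hc : conj x (c + 1) ≤ p) :
    Ipart k n (trunc x c) ≤ Submodule.colon (IXset k n Xs)
      ((Ipart k n (rect p 1) ^ (n * x 0 + 1) : Ideal (MvPolynomial (Fin n) k)) : Set _) := by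
  have hmul : Ipart k n (trunc x c) * Ipart k n (rect p 1) ^ (n * x 0 + 1) ≤ IXset k n Xs := by
    rw [Ipart_eq_span_s1]
    refine (Ideal.mul_mono_right (Ipart_rect_pow_le_span hpn _)).trans ?_
    rw [span_monomial_mul_span_monomial, Ideal.span_le]
    rintro _ ⟨_, ⟨s, ⟨σ, hs⟩, w, ⟨hsum, hle⟩, rfl⟩, rfl⟩
    have hw := le_card_filter_le_of_sum_eq (a := x 0) hle hsum (by simp)
    obtain ⟨τ, hτ⟩ := exists_perm_le_trunc_add hx hc σ hw
    exact monomial_mem_IXset_iff.mpr ⟨x, hxX, τ, fun i => by simpa [hs, trunc] using hτ i⟩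
  exact fun f hf => Submodule.mem_colon.mpr fun g hg => hmul (Ideal.mul_mem_mul hf hg)

/-- Whichever of the `p` largest entries of `u` is smallest decides the count: if it is still
`≥ v`, the other entries of `u` bound those of `x ∘ σ`; if not, only `p` entries of `x ∘ σ`
reach `v`, while the partition `x` has `p + 1` parts `≥ x_{p+1} ≥ v`. -/
theorem exists_perm_trunc_apply_le {x : ℕ → ℕ} (hx : PartitionOn n x) (hpn : p ≤ n)
    {u : Fin n → ℕ} {τ σ : Equiv.Perm (Fin n)} {d : ℕ} (hτ : ∀ i j, τ i ≤ τ j → u j ≤ u i)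
    (hdom : ∀ i, x (σ i) ≤ d * rect p 1 (τ i) + u i) :
    ∃ ρ : Equiv.Perm (Fin n), ∀ i, min (x (ρ i)) (x p) ≤ u i := by
  refine exists_perm_le_of_card_le (y := fun j : Fin n => min (x j) (x p)) fun v => ?_
  by_cases hvp : x p < v
  · rw [card_eq_zero.mpr (filter_eq_empty_iff.mpr fun j _ => by omega)]
    exact Nat.zero_le _
  have hfilter : #{j : Fin n | v ≤ min (x j) (x p)} = #{i | v ≤ x (σ i)} := by
    rw [card_filter_comp_perm σ (fun j : Fin n => v ≤ x j)]
    congr 1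
    ext j
    simp only [mem_filter, mem_univ, true_and, le_min_iff]
    omega
  have hlow : ∀ i, ¬ (τ i : ℕ) < p → x (σ i) ≤ u i := fun i hi => by
    simpa [rect, hi] using hdom i
  rw [hfilter]
  by_cases htop : ∀ i, (τ i : ℕ) < p → v ≤ u i
  · refine card_le_card fun i hi => ?_
    simp only [mem_filter, mem_univ, true_and] at hi ⊢
    by_cases hi' : (τ i : ℕ) < p
    · exact htop i hi'
    · exact hi.trans (hlow i hi')
  obtain ⟨i₀, hi₀p, hi₀v⟩ : ∃ i₀, (τ i₀ : ℕ) < p ∧ u i₀ < v := by simpa using htop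
  have hsub : ({i | v ≤ x (σ i)} : Finset (Fin n)) ⊆ ({i | (τ i : ℕ) < p} : Finset (Fin n)) :=
      fun i hi => by
    simp only [mem_filter, mem_univ, true_and] at hi ⊢
    by_contra hip
    have := hτ i₀ i (Fin.le_def.mpr (by omega : (τ i₀ : ℕ) ≤ τ i))
    have := hlow i hip
    omega
  have hcard := card_le_card hsub
  rw [card_filter_comp_perm τ (fun j : Fin n => (j : ℕ) < p), card_filter_val_lt hpn,
    card_filter_comp_perm σ (fun j : Fin n => v ≤ x j)] at hcard
  have := lt_card_filter_le hx (by omega : 0 < v) (not_lt.mp hvp)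
  omega

theorem colon_le_IXset (hpn : p ≤ n) {Xs : Set (ℕ → ℕ)} (hXs : ∀ x ∈ Xs, PartitionOn n x)
    (d : ℕ) :
    Submodule.colon (IXset k n Xs)
      ((Ipart k n (rect p 1) ^ d : Ideal (MvPolynomial (Fin n) k)) : Set _) ≤
      IXset k n {y | ∃ x ∈ Xs, ∃ c : ℕ, conj x (c + 1) ≤ p ∧ (0 < c → p < conj x c) ∧
        y = trunc x c} := by
  intro f hf
  rw [mem_IXset_iff]
  intro u hu
  obtain ⟨τ, hτ⟩ := exists_perm_antitone (fun i => u i)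
  set e : Fin n →₀ ℕ := Finsupp.equivFunOnFinite.symm fun i => rect p 1 (τ i)
  have hgen : monomial e (1 : k) ∈ Ipart k n (rect p 1) := by
    rw [Ipart_eq_span_s1]
    exact Ideal.subset_span ⟨e, ⟨τ, fun i => rfl⟩, rfl⟩
  have hmem : monomial (d • e) 1 * f ∈ IXset k n Xs := by
    have hpow : monomial (d • e) (1 : k) ∈ Ipart k n (rect p 1) ^ d := by
      simpa only [monomial_pow, one_pow] using Ideal.pow_mem_pow hgen d
    have := Submodule.mem_colon.mp hf _ hpow
    rwa [smul_eq_mul, mul_comm] at this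
  have hsupp : d • e + u ∈ (monomial (d • e) (1 : k) * f).support := by
    rw [mem_support_iff, coeff_monomial_mul, one_mul]
    exact mem_support_iff.mp hu
  obtain ⟨x, hxX, σ, hσ⟩ := mem_IXset_iff.mp hmem _ hsupp
  have hx := hXs x hxX
  obtain ⟨ρ, hρ⟩ := exists_perm_trunc_apply_le hx hpn hτ (fun i => by simpa [e] using hσ i)
  exact ⟨trunc x (x p), ⟨x, hxX, x p, conj_apply_succ_le (fun i j h => hx.1 i j h) p,
    lt_conj_apply hx, rfl⟩, ρ, hρ⟩

end Saturation

theorem stmt_1_general {k : Type*} [Field k] (n p : ℕ) (hpn : p ≤ n)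
    (Xs : Set (ℕ → ℕ)) (hXs : ∀ x ∈ Xs, PartitionOn n x) :
    (⨆ d : ℕ, Submodule.colon (IXset k n Xs) ((Ipart k n (rect p 1) ^ d : Ideal (MvPolynomial (Fin n) k)) : Set (MvPolynomial (Fin n) k))) =
      IXset k n
        { y | ∃ x ∈ Xs, ∃ c : ℕ, conj x (c + 1) ≤ p ∧ (0 < c → p < conj x c) ∧
          y = trunc x c } := by
  refine le_antisymm (iSup_le (colon_le_IXset hpn hXs)) (iSup₂_le fun y hy => ?_)
  obtain ⟨x, hxX, c, hc, -, rfl⟩ := hy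
  exact (Ipart_trunc_le_colon hxX (hXs x hxX) hpn hc).trans (le_iSup (fun d => Submodule.colon
    (IXset k n Xs) ((Ipart k n (rect p 1) ^ d : Ideal (MvPolynomial (Fin n) k)) : Set _)) _)

theorem stmt_1 {k : Type*} [Field k] (n p : ℕ) (hp : 1 ≤ p) (hpn : p ≤ n)
    (Xs : Set (ℕ → ℕ)) (hXs : ∀ x ∈ Xs, PartitionOn n x) :
    (⨆ d : ℕ, Submodule.colon (IXset k n Xs) ((Ipart k n (rect p 1) ^ d : Ideal (MvPolynomial (Fin n) k)) : Set (MvPolynomial (Fin n) k))) =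
      IXset k n
        { y | ∃ x ∈ Xs, ∃ c : ℕ, conj x (c + 1) ≤ p ∧ (0 < c → p < conj x c) ∧
          y = trunc x c } :=
  stmt_1_general n p hpn Xs hXs
end

section
/- Let Y ⊆ P_n, 0 ≤ l < n, and z ∈ P_n with z_1 = ⋯ = z_{l+1}. If (z,l) ∈ Z(Y), then I_Y ⊆ I_{Y_{z,l}}. -/
open MvPolynomial

/-!
Containment of partitions `w ≤ y` gives `I_y ⊆ I_w`, since every permuted monomial `e^{σ y}` is
divisible by `e^{σ w}`. So it suffices that each `y ∈ Y` contains some rectangle of `Y_{z,l}`,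
with `c = z_1`. If `y'_{c+1} ≥ l + 1`, then `y` contains `((c+1)^{l+1})`. Otherwise condition (2)
of `Z(Y)` forces `y(c) ≰ z`, so `z_i < min(y_i, c)` for some `i`, necessarily `i > l`; if `j ≤ i`
is the first index with `z_j = z_i`, then `z_{j-1} > z_j` and `y` contains `((z_j+1)^j)`.
-/

lemma Ipart_le_Ipart_of_le (k : Type*) [Field k] (n : ℕ) {w x : ℕ → ℕ} (h : w ≤ x) :
    Ipart k n x ≤ Ipart k n w := by
  rw [Ipart, Ideal.span_le]
  rintro f ⟨σ, rfl⟩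
  have hfactor : ∏ i : Fin n, (X i : MvPolynomial (Fin n) k) ^ x (σ i) =
      (∏ i : Fin n, (X i : MvPolynomial (Fin n) k) ^ w (σ i)) *
        ∏ i : Fin n, (X i : MvPolynomial (Fin n) k) ^ (x (σ i) - w (σ i)) := by
    rw [← Finset.prod_mul_distrib]
    exact Finset.prod_congr rfl fun i _ => by rw [← pow_add, Nat.add_sub_cancel' (h _)]
  rw [hfactor]
  exact Ideal.mul_mem_right _ _ (Ideal.subset_span ⟨σ, rfl⟩)

lemma conj_le_of_lt {y : ℕ → ℕ} (hy : Antitone y) {m t : ℕ} (h : y t < m) :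
    conj y m ≤ t := by
  have hsub : { j : ℕ | m ≤ y j } ⊆ Set.Iio t := fun j hj => by
    by_contra hjt
    have : m ≤ y j := hj
    have := hy (not_lt.mp hjt)
    omega
  calc conj y m ≤ (Set.Iio t).ncard := Set.ncard_le_ncard hsub (Set.finite_Iio t)
    _ = t := by rw [← Finset.coe_range, Set.ncard_coe_finset, Finset.card_range]

lemma rect_le_of_le_conj {y : ℕ → ℕ} (hy : Antitone y) {a b : ℕ} (h : a ≤ conj y b) :
    rect a b ≤ y := fun t => by
  unfold rect
  split_ifs with hta
  · by_contra! hyt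
    have := conj_le_of_lt hy hyt
    omega
  · exact Nat.zero_le _

lemma exists_succ_eq_lt_of_lt_zero {z : ℕ → ℕ} (hz : Antitone z) {i : ℕ}
    (hi : z i < z 0) : ∃ m, m + 1 ≤ i ∧ z (m + 1) = z i ∧ z (m + 1) < z m := by
  classical
  have hex : ∃ j, z j ≤ z i := ⟨i, le_rfl⟩
  obtain ⟨m, hm⟩ : ∃ m, Nat.find hex = m + 1 :=
    Nat.exists_eq_succ_of_ne_zero fun h0 => by
      have := Nat.find_spec hex
      rw [h0] at this
      omega
  have hle : m + 1 ≤ i := hm ▸ Nat.find_le le_rfl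
  have heq : z (m + 1) = z i := le_antisymm (hm ▸ Nat.find_spec hex) (hz hle)
  have hprev : ¬ z m ≤ z i := Nat.find_min hex (by omega)
  exact ⟨m, hle, heq, by omega⟩

lemma exists_mem_Y'set_le_of_not_trunc_le {n l : ℕ} {z y : ℕ → ℕ} (hz : Antitone z)
    (hzflat : ∀ i ≤ l, z i = z 0) (hy : PartitionOn n y) (h : ¬ trunc y (z 0) ≤ z) :
    ∃ w ∈ Y'set n z l, w ≤ y := by
  obtain ⟨i, hi⟩ : ∃ i, z i < min (y i) (z 0) := by
    by_contra! hcon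
    exact h hcon
  have hyi : z i < y i := lt_of_lt_of_le hi (min_le_left _ _)
  have hin : i < n := by
    by_contra! hni
    rw [hy.2 i hni] at hyi
    omega
  obtain ⟨m, hmi, heq, hdrop⟩ :=
    exists_succ_eq_lt_of_lt_zero hz (lt_of_lt_of_le hi (min_le_right _ _))
  have hlm : l ≤ m := by
    by_contra! hml
    have := hzflat (m + 1) hml
    omega
  refine ⟨_, ⟨m, hlm, by omega, hdrop, rfl⟩, fun t => ?_⟩
  unfold rect
  split_ifs with ht
  · rw [heq]
    exact hyi.trans_le (hy.1 t i (by omega))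
  · exact Nat.zero_le _

lemma exists_mem_Yset_le {n l : ℕ} {z : ℕ → ℕ} (hz : Antitone z)
    (hzflat : ∀ i ≤ l, z i = z 0) {Y : Set (ℕ → ℕ)} (hY : ∀ y ∈ Y, PartitionOn n y)
    (hzl : (z, l) ∈ ZX n Y) {y : ℕ → ℕ} (hyY : y ∈ Y) :
    ∃ w ∈ Yset n z l, w ≤ y := by
  by_cases hconj : l + 1 ≤ conj y (z 0 + 1)
  · exact ⟨_, Or.inl rfl, rect_le_of_le_conj (hY y hyY).1 hconj⟩
  · have htrunc : ¬ trunc y (z 0) ≤ z := fun htr =>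
      hconj (hzl.2.2 y hyY htr (by dsimp only; omega)).ge
    obtain ⟨w, hw, hwy⟩ := exists_mem_Y'set_le_of_not_trunc_le hz hzflat (hY y hyY) htrunc
    exact ⟨w, Or.inr hw, hwy⟩

theorem stmt_4_general {k : Type*} [Field k] (n l : ℕ)
    (z : ℕ → ℕ) (hz : PartitionOn n z) (hzflat : ∀ i ≤ l, z i = z 0)
    (Y : Set (ℕ → ℕ)) (hY : ∀ y ∈ Y, PartitionOn n y)
    (hzl : (z, l) ∈ ZX n Y) :
    IXset k n Y ≤ IXset k n (Yset n z l) := by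
  refine iSup₂_le fun y hy => ?_
  obtain ⟨w, hw, hwy⟩ := exists_mem_Yset_le hz.1 hzflat hY hzl hy
  exact (Ipart_le_Ipart_of_le k n hwy).trans (le_iSup₂_of_le w hw le_rfl)

theorem stmt_4 {k : Type*} [Field k] (n l : ℕ) (hl : l < n)
    (z : ℕ → ℕ) (hz : PartitionOn n z) (hzflat : ∀ i ≤ l, z i = z 0)
    (Y : Set (ℕ → ℕ)) (hY : ∀ y ∈ Y, PartitionOn n y)
    (hzl : (z, l) ∈ ZX n Y) :
    IXset k n Y ≤ IXset k n (Yset n z l) :=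
  stmt_4_general n l z hz hzflat Y hY hzl
end

section
/- Let 0 ≤ l < n and z ∈ P_n with z_1 = ⋯ = z_{l+1}. If (y,u) ∈ Z(Y_{z,l} ∪ {z}), then u ≥ l. -/
open MvPolynomial

/-!
By condition (2), the witness `x` of condition (1) satisfies `x'_{c+1} = u + 1 ≠ 0`.
The conjugate of a rectangle `(b^a)` only takes the values `a` and `0`, and every rectangle
in `Y_{z,l}` has at least `l + 1` rows. For `x = z`, `z'_{c+1} ≠ 0` forces `c < z_1`, and then
the `l + 1` equal parts `z_1 = ⋯ = z_{l+1}` are all counted by `z'_{c+1}`.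
-/

lemma conj_rect {a b i : ℕ} (hi : 0 < i) : conj (rect a b) i = if i ≤ b then a else 0 := by
  unfold conj rect
  split_ifs with hib
  · have hset : {j : ℕ | i ≤ if j < a then b else 0} = ↑(Finset.range a) := by
      ext j
      simp only [Finset.coe_range, Set.mem_ofPred_eq, Set.mem_Iio]
      split_ifs <;> omega
    rw [hset, Set.ncard_coe_finset, Finset.card_range]
  · have hset : {j : ℕ | i ≤ if j < a then b else 0} = ∅ := by
      ext j
      simp only [Set.mem_ofPred_eq, Set.mem_empty_iff_false, iff_false]
      split_ifs <;> omega
    rw [hset, Set.ncard_empty]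

lemma le_of_conj_ne_zero {x : ℕ → ℕ} {i : ℕ} (hx : Antitone x) (h : conj x i ≠ 0) :
    i ≤ x 0 := by
  obtain ⟨j, hj⟩ := Set.nonempty_of_ncard_ne_zero h
  exact hj.trans (hx (Nat.zero_le j))

-- `Set.ncard` vanishes on infinite sets, so `conj x i ≠ 0` already gives finiteness.
lemma le_conj {x : ℕ → ℕ} {i k : ℕ} (h : conj x i ≠ 0) (hk : ∀ j < k, i ≤ x j) :
    k ≤ conj x i := by
  have hsub : ↑(Finset.range k) ⊆ {j : ℕ | i ≤ x j} := fun j hj =>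
    hk j (Finset.mem_range.mp hj)
  simpa [conj] using Set.ncard_le_ncard hsub (Set.finite_of_ncard_ne_zero h)

theorem stmt_8_general (n l : ℕ) (z : ℕ → ℕ) (hz : PartitionOn n z)
    (hzflat : ∀ i ≤ l, z i = z 0) :
    ∀ yu ∈ ZX n (Yset n z l ∪ {z}), l ≤ yu.2 := by
  rintro ⟨y, u⟩ ⟨-, ⟨x, hx, hxy, hxu⟩, hall⟩
  have hconj : conj x (y 0 + 1) = u + 1 := hall x hx hxy hxu
  rcases hx with (rfl | ⟨m, hm, -, -, rfl⟩) | hxz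
  · rw [conj_rect (Nat.succ_pos _)] at hconj
    split_ifs at hconj; omega
  · rw [conj_rect (Nat.succ_pos _)] at hconj
    split_ifs at hconj; omega
  · rw [Set.mem_singleton_iff.mp hxz] at hconj
    have hne : conj z (y 0 + 1) ≠ 0 := by omega
    have hc : y 0 + 1 ≤ z 0 := le_of_conj_ne_zero hz.1 hne
    have hl : l + 1 ≤ conj z (y 0 + 1) :=
      le_conj hne fun j hj => (hzflat j (Nat.lt_succ_iff.mp hj)).symm ▸ hc
    omega

theorem stmt_8 (n l : ℕ) (hl : l < n) (z : ℕ → ℕ) (hz : PartitionOn n z)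
    (hzflat : ∀ i ≤ l, z i = z 0) :
    ∀ yu ∈ ZX n (Yset n z l ∪ {z}), l ≤ yu.2 :=
  stmt_8_general n l z hz hzflat
end

section
/- Let w, z ∈ P_n, d ≥ 1, and 0 ≤ l < n. If the partitioning problem BP(d,z;w) is (l+1)-feasible but not l-feasible, then z_{l+1} < d·w_{l+1}. -/
open MvPolynomial

/-!
Suppose `z_{l+1} ≥ d·w_{l+1}`. Bins `1, …, l+1` of an `(l+1)`-feasible partition hold `d(l+1)`
balls, of which at most `dl` are copies of `w_1, …, w_l`; so they contain `d` balls of weight at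
most `w_{l+1}`. Permuting the balls inside bins `1, …, l+1` so that these `d` balls make up bin
`l+1` leaves the bins beyond `l+1` untouched and gives bin `l+1` weight at most
`d·w_{l+1} ≤ z_{l+1}`: the partition becomes `l`-feasible.
-/

open Finset Equiv

theorem Finset.exists_perm_map_eq_of_card_eq {α : Type*} [DecidableEq α] [Fintype α]
    {s t : Finset α} (h : #s = #t) :
    ∃ π : Perm α, s.map π.toEmbedding = t ∧ π.support ⊆ s ∪ t := by
  set U := s ∪ t
  have hcard : Fintype.card {x : U // x.1 ∈ s} = Fintype.card {x : U // x.1 ∈ t} := by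
    rw [Fintype.card_congr (subtypeSubtypeEquivSubtype (mem_union_left t)),
      Fintype.card_congr (subtypeSubtypeEquivSubtype (mem_union_right s)),
      Fintype.card_coe, Fintype.card_coe, h]
  let τ : Perm U := (Fintype.equivOfCardEq hcard).extendSubtype
  refine ⟨Perm.ofSubtype τ, ?_, ?_⟩
  · refine eq_of_subset_of_card_le (fun y hy => ?_) (by rw [card_map, h])
    obtain ⟨x, hx, rfl⟩ := mem_map.1 hy
    rw [Equiv.toEmbedding_apply,
      Perm.ofSubtype_apply_of_mem (p := (· ∈ U)) τ (mem_union_left t hx)]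
    exact (Fintype.equivOfCardEq hcard).extendSubtype_mem _ hx
  · rw [Perm.support_ofSubtype]
    intro x hx
    obtain ⟨y, -, rfl⟩ := mem_map.1 hx
    exact y.2

theorem Finset.card_filter_mem_of_card_fiber {α β : Type*} [Fintype α] [DecidableEq β]
    {A : α → β} {d : ℕ} (hA : ∀ b, #{p | A p = b} = d) (B : Finset β) :
    #{p | A p ∈ B} = #B * d := by
  rw [card_eq_sum_card_fiberwise (s := {p | A p ∈ B}) (f := A) (t := B)
      fun p hp => (mem_filter.1 hp).2,
    ← sum_const_nat fun b hb => ?_]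
  rw [filter_filter, ← hA b]
  congr 1
  ext p
  simp only [mem_filter, mem_univ, true_and, and_iff_right_iff_imp]
  exact fun h => h ▸ hb

theorem card_filter_snd_lt {d n l : ℕ} (hl : l ≤ n) :
    #{p : Fin d × Fin n | (p.2 : ℕ) < l} = d * l := by
  rw [← univ_product_univ, filter_product_right (fun i : Fin n => (i : ℕ) < l), card_product,
    card_univ, Fintype.card_fin, Fin.card_filter_val_lt, min_eq_right hl]

theorem exists_light_balls_of_card_fiber {n d l : ℕ} (hl : l < n)
    {A : Fin d × Fin n → Fin n} (hA : ∀ b, #{p | A p = b} = d) :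
    ∃ T : Finset (Fin d × Fin n), #T = d ∧ ∀ p ∈ T, (A p : ℕ) ≤ l ∧ l ≤ (p.2 : ℕ) := by
  let S : Finset (Fin d × Fin n) := {p | A p ∈ Iic ⟨l, hl⟩}
  have hS : #S = (l + 1) * d := by
    rw [card_filter_mem_of_card_fiber hA, Fin.card_Iic]
  have hsplit := card_filter_add_card_filter_not (s := S) fun p => (p.2 : ℕ) < l
  have hheavy : #{p ∈ S | (p.2 : ℕ) < l} ≤ d * l :=
    card_filter_snd_lt hl.le ▸ card_le_card (filter_subset_filter _ (subset_univ S))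
  simp only [not_lt] at hsplit
  obtain ⟨T, hTS, hT⟩ :=
    exists_subset_card_eq (s := {p ∈ S | l ≤ (p.2 : ℕ)}) (n := d) (by linarith)
  refine ⟨T, hT, fun p hp => ?_⟩
  simpa [S, Fin.le_def] using hTS hp

theorem RFeasible.of_succ {n d l : ℕ} {z w : ℕ → ℕ} (hw : Antitone w)
    (hl : l < n) (hzl : d * w l ≤ z l) (h : RFeasible n d (l + 1) z w) :
    RFeasible n d l z w := by
  obtain ⟨A, hcard, hle⟩ := h
  obtain ⟨T, hT, hTlight⟩ := exists_light_balls_of_card_fiber hl hcard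
  let Tl : Finset (Fin d × Fin n) := {p | A p = ⟨l, hl⟩}
  obtain ⟨π, hπT, hπ⟩ := exists_perm_map_eq_of_card_eq (s := T) (t := Tl) (by rw [hT, hcard])
  -- `π` only moves balls of `T ∪ Tl`, all of which lie in bins `≤ l`.
  have hmoved : ∀ p, π p ≠ p → (A p : ℕ) ≤ l ∧ (A (π p) : ℕ) ≤ l := by
    have hlow : ∀ q ∈ π.support, (A q : ℕ) ≤ l := fun q hq => by
      rcases mem_union.1 (hπ hq) with hq | hq
      · exact (hTlight q hq).1
      · simp [(mem_filter.1 hq).2]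
    exact fun p hp => ⟨hlow p (Perm.mem_support.2 hp),
      hlow _ (Perm.apply_mem_support.2 (Perm.mem_support.2 hp))⟩
  refine ⟨fun p => A (π p), fun b => (card_equiv π (by simp)).trans (hcard b), fun b hb => ?_⟩
  rcases hb.eq_or_lt with hb | hb
  · obtain rfl : b = ⟨l, hl⟩ := Fin.ext hb.symm
    have hfiber : ∀ p, A (π p) = ⟨l, hl⟩ ↔ p ∈ T := fun p => by
      rw [← mem_map' π.toEmbedding, hπT, toEmbedding_apply]
      simp [Tl]
    rw [filter_congr fun p _ => hfiber p, filter_mem_eq_inter, univ_inter]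
    calc ∑ p ∈ T, w p.2 ≤ ∑ _p ∈ T, w l := sum_le_sum fun p hp => hw (hTlight p hp).2
      _ = d * w l := by rw [sum_const, hT, smul_eq_mul]
      _ ≤ z l := hzl
  · have hsame : ∀ p, A (π p) = b ↔ A p = b := fun p => by
      by_cases h : π p = p
      · rw [h]
      · have := hmoved p h
        constructor <;> rintro rfl <;> omega
    rw [filter_congr fun p _ => hsame p]
    exact hle b hb

theorem stmt_13_general (n d l : ℕ) (hl : l < n)
    (w z : ℕ → ℕ) (hw : PartitionOn n w)
    (h1 : RFeasible n d (l + 1) z w) (h2 : ¬ RFeasible n d l z w) :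
    z l < d * w l :=
  lt_of_not_ge fun hzl => h2 (h1.of_succ (fun _ _ => hw.1 _ _) hl hzl)

theorem stmt_13 (n d l : ℕ) (hd : 1 ≤ d) (hl : l < n)
    (w z : ℕ → ℕ) (hw : PartitionOn n w) (hz : PartitionOn n z)
    (h1 : RFeasible n d (l + 1) z w) (h2 : ¬ RFeasible n d l z w) :
    z l < d * w l :=
  stmt_13_general n d l hl w z hw h1 h2
end
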